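/- arXiv:1302.0793 — 2 statements merged into one kernel-verified Lean document; each statement's English description precedes it below -/
import Mathlib

section
/- Let ρ, V : ℝ → ℝ be twice continuously differentiable, let D > 0, and fix x ∈ ℝ. Then as h → 0⁺, the uniform Wang–Peskin–Elston discrete operator (D/h²)·[ A(V(x) − V(x−h))·ρ(x−h) − (A(V(x−h) − V(x)) + A(V(x+h) − V(x)))·ρ(x) + A(V(x) − V(x+h))·ρ(x+h) ] converges to D·(ρ''(x) + ρ'(x)·V'(x) + ρ(x)·V''(x)), which equals the right-hand side D·(ρ V' + ρ')'(x) of the one-dimensional Fokker–Planck equation; i.e., the Wang–Peskin–Elston discretization is consistent. -/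
open Real Filter

/-- The Wang–Peskin–Elston weight function: `A(u) = u / (exp u - 1)` for `u ≠ 0`,
and `A(0) = 1`. -/
noncomputable def wpeA (u : ℝ) : ℝ :=
  if u = 0 then 1 else u / (Real.exp u - 1)

/-!
By the reflection identity `A(-u) = A(u) + u`, the stencil equals the central second
differences of `ρ` and of `V` (the latter weighted by `ρ(x)`) plus the cross terms
`(A(a±) - 1)(ρ(x±h) - ρ(x))` with `a± = V(x) - V(x±h)`. Since `A = 1/B` with
`B(u) = (eᵘ - 1)/u` and `B'(0) = 1/2`, we get `A'(0) = -1/2`, so `(A(a±) - 1)/h → ±V'(x)/2`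
and each cross term contributes `ρ'(x)V'(x)/2` after division by `h²`.
-/

open Topology

lemma wpeA_neg (u : ℝ) : wpeA (-u) = wpeA u + u := by
  rcases eq_or_ne u 0 with rfl | hu
  · simp
  have hexp : exp u - 1 ≠ 0 := sub_ne_zero.mpr fun h => hu (exp_eq_one_iff u |>.mp h)
  have hexp' : 1 - exp u ≠ 0 := fun h => hexp (by linear_combination -h)
  simp only [wpeA, neg_eq_zero, hu, if_false, exp_neg]
  field_simp
  ring

lemma wpeA_eq_inv_dslope_exp : wpeA = (dslope exp 0)⁻¹ := by
  ext u
  rcases eq_or_ne u 0 with rfl | hu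
  · simp [wpeA, dslope_same]
  · simp [wpeA, hu, dslope_of_ne, slope_def_field]

lemma hasDerivAt_dslope_exp_zero : HasDerivAt (dslope exp 0) (1 / 2) 0 := by
  rw [hasDerivAt_iff_tendsto_slope]
  have hslope : ∀ u ∈ ({0}ᶜ : Set ℝ), (exp u - 1 - u) / u ^ 2 = slope (dslope exp 0) 0 u := by
    intro u hu
    rw [Set.mem_compl_singleton_iff] at hu
    simp only [slope_def_field, dslope_of_ne _ hu, dslope_same, Real.deriv_exp, exp_zero]
    field_simp
    ring
  refine tendsto_nhdsWithin_congr hslope ?_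
  have hexp : Tendsto (fun u => (exp u - 1) / (2 * u)) (𝓝[≠] 0) (𝓝 (1 / 2)) := by
    have := ((hasDerivAt_exp 0).tendsto_slope_zero).div_const 2
    rw [exp_zero] at this
    refine this.congr fun u => ?_
    simp only [zero_add, smul_eq_mul]
    field_simp
  have hcont : Continuous fun u => exp u - 1 - u := by fun_prop
  refine HasDerivAt.lhopital_zero_nhdsNE (f' := fun u => exp u - 1) (g' := fun u => 2 * u)
    ?_ ?_ ?_ ?_ ?_ hexp
  · exact Eventually.of_forall fun u => by
      simpa using ((hasDerivAt_exp u).sub_const 1).fun_sub (hasDerivAt_id' u)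
  · exact Eventually.of_forall fun u => by simpa using hasDerivAt_pow 2 u
  · filter_upwards [self_mem_nhdsWithin] with u hu
    exact mul_ne_zero two_ne_zero hu
  · simpa using (hcont.tendsto 0).mono_left nhdsWithin_le_nhds
  · simpa using ((continuous_pow 2).tendsto (0 : ℝ)).mono_left nhdsWithin_le_nhds

lemma hasDerivAt_wpeA_zero : HasDerivAt wpeA (-1 / 2) 0 := by
  rw [wpeA_eq_inv_dslope_exp]
  exact (hasDerivAt_dslope_exp_zero.inv (by simp [dslope_same])).congr_deriv
    (by norm_num [dslope_same])

lemma HasDerivAt.tendsto_sub_div_nhdsGT {f : ℝ → ℝ} {f' : ℝ} (hf : HasDerivAt f f' 0) :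
    Tendsto (fun h => (f h - f 0) / h) (𝓝[>] 0) (𝓝 f') := by
  simpa [div_eq_inv_mul] using hf.tendsto_slope_zero_right

theorem tendsto_second_difference_div_sq {f : ℝ → ℝ} {x : ℝ} (hf : Differentiable ℝ f)
    (hf' : DifferentiableAt ℝ (deriv f) x) :
    Tendsto (fun h => (f (x + h) + f (x - h) - 2 * f x) / h ^ 2) (𝓝[>] 0)
      (𝓝 (deriv (deriv f) x)) := by
  have hslope := hf'.hasDerivAt.tendsto_slope_zero
  have hcentral : Tendsto (fun h => (deriv f (x + h) - deriv f (x - h)) / (2 * h)) (𝓝[>] 0)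
      (𝓝 (deriv (deriv f) x)) := by
    have hright := hslope.mono_left (nhdsGT_le_nhdsNE 0)
    have hneg : Tendsto Neg.neg (𝓝[>] (0 : ℝ)) (𝓝[<] 0) := by
      simpa using tendsto_neg_nhdsGT_neg (a := (0 : ℝ))
    have hleft := (hslope.mono_left (nhdsLT_le_nhdsNE 0)).comp hneg
    have hmean := (hright.add hleft).div_const 2
    rw [add_self_div_two] at hmean
    refine hmean.congr fun h => ?_
    rcases eq_or_ne h 0 with rfl | hh
    · simp
    simp only [Function.comp, smul_eq_mul, ← sub_eq_add_neg]
    field_simp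
    ring
  have hnum : Continuous fun h => f (x + h) + f (x - h) - 2 * f x := by
    have := hf.continuous
    fun_prop
  refine HasDerivAt.lhopital_zero_nhdsGT (f' := fun h => deriv f (x + h) - deriv f (x - h))
    (g' := fun h => 2 * h) ?_ ?_ ?_ ?_ ?_ hcentral
  · refine Eventually.of_forall fun h => ?_
    have := (((hf (x + h)).hasDerivAt.comp_const_add x h).fun_add
      ((hf (x - h)).hasDerivAt.comp_const_sub x h)).sub_const (2 * f x)
    simpa [← sub_eq_add_neg] using this
  · exact Eventually.of_forall fun h => by simpa using hasDerivAt_pow 2 h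
  · filter_upwards [self_mem_nhdsWithin] with h (hh : 0 < h)
    positivity
  · have := (hnum.tendsto 0).mono_left (nhdsWithin_le_nhds (s := Set.Ioi 0))
    simpa [two_mul] using this
  · simpa using ((continuous_pow 2).tendsto (0 : ℝ)).mono_left nhdsWithin_le_nhds

lemma HasDerivAt.tendsto_wpeA_comp_sub_one_div {φ : ℝ → ℝ} {φ' : ℝ} (hφ : HasDerivAt φ φ' 0)
    (hφ₀ : φ 0 = 0) :
    Tendsto (fun h => (wpeA (φ h) - 1) / h) (𝓝[>] 0) (𝓝 (-φ' / 2)) := by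
  have := (hasDerivAt_wpeA_zero.comp_of_eq 0 hφ hφ₀.symm).tendsto_sub_div_nhdsGT
  have hA₀ : wpeA 0 = 1 := if_pos rfl
  simp only [Function.comp_def, hφ₀, hA₀] at this
  convert this using 2
  ring

lemma wpe_stencil_eq (a b l c r : ℝ) :
    wpeA a * l - (wpeA (-a) + wpeA (-b)) * c + wpeA b * r =
      (r + l - 2 * c) + (wpeA a - 1) * (l - c) + (wpeA b - 1) * (r - c)
        - (a + b) * c := by
  rw [wpeA_neg, wpeA_neg]
  ring

theorem wpe_uniform_consistency_general (ρ V : ℝ → ℝ)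
    (hρ : ContDiff ℝ 2 ρ) (hV : ContDiff ℝ 2 V) (D : ℝ) (x : ℝ) :
    Tendsto
      (fun h : ℝ => D / h ^ 2 *
        (wpeA (V x - V (x - h)) * ρ (x - h)
          - (wpeA (V (x - h) - V x) + wpeA (V (x + h) - V x)) * ρ x
          + wpeA (V x - V (x + h)) * ρ (x + h)))
      (nhdsWithin (0 : ℝ) (Set.Ioi 0))
      (nhds (D * (deriv (deriv ρ) x + deriv ρ x * deriv V x + ρ x * deriv (deriv V) x))) := by
  have hρ' : HasDerivAt ρ (deriv ρ x) x := (hρ.differentiable two_ne_zero x).hasDerivAt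
  have hV' : HasDerivAt V (deriv V x) x := (hV.differentiable two_ne_zero x).hasDerivAt
  have hρ_sub : Tendsto (fun h => (ρ (x - h) - ρ x) / h) (𝓝[>] 0) (𝓝 (-deriv ρ x)) := by
    simpa using (HasDerivAt.comp_const_sub x 0 (by simpa using hρ')).tendsto_sub_div_nhdsGT
  have hρ_add : Tendsto (fun h => (ρ (x + h) - ρ x) / h) (𝓝[>] 0) (𝓝 (deriv ρ x)) := by
    simpa using (HasDerivAt.comp_const_add x 0 (by simpa using hρ')).tendsto_sub_div_nhdsGT
  have hV_sub : HasDerivAt (fun h => V x - V (x - h)) (deriv V x) 0 := by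
    simpa using (HasDerivAt.comp_const_sub x 0 (by simpa using hV')).const_sub (V x)
  have hV_add : HasDerivAt (fun h => V x - V (x + h)) (-deriv V x) 0 := by
    simpa using (HasDerivAt.comp_const_add x 0 (by simpa using hV')).const_sub (V x)
  have hA_sub := hV_sub.tendsto_wpeA_comp_sub_one_div (by simp)
  have hA_add := hV_add.tendsto_wpeA_comp_sub_one_div (by simp)
  have hlim := ((((tendsto_second_difference_div_sq (hρ.differentiable two_ne_zero)
    (hρ.differentiable_deriv_two x)).add (hA_sub.mul hρ_sub)).add (hA_add.mul hρ_add)).add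
    ((tendsto_second_difference_div_sq (hV.differentiable two_ne_zero)
    (hV.differentiable_deriv_two x)).mul_const (ρ x))).const_mul D
  convert hlim.congr' ?_ using 2
  · ring
  filter_upwards [self_mem_nhdsWithin] with h (hh : 0 < h)
  rw [← neg_sub (V x), ← neg_sub (V x) (V (x + h)), wpe_stencil_eq]
  field_simp
  ring

/-- Consistency of the uniform Wang–Peskin–Elston discretization: for `ρ, V` twice
continuously differentiable and `D > 0`, as `h → 0⁺` the discrete operator converges
to `D (ρ'' + ρ' V' + ρ V'')(x)`, the right-hand side of the Fokker–Planck equation. -/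
theorem wpe_uniform_consistency (ρ V : ℝ → ℝ)
    (hρ : ContDiff ℝ 2 ρ) (hV : ContDiff ℝ 2 V) (D : ℝ) (hD : 0 < D) (x : ℝ) :
    Tendsto
      (fun h : ℝ => D / h ^ 2 *
        (wpeA (V x - V (x - h)) * ρ (x - h)
          - (wpeA (V (x - h) - V x) + wpeA (V (x + h) - V x)) * ρ x
          + wpeA (V x - V (x + h)) * ρ (x + h)))
      (nhdsWithin (0 : ℝ) (Set.Ioi 0))
      (nhds (D * (deriv (deriv ρ) x + deriv ρ x * deriv V x + ρ x * deriv (deriv V) x))) :=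
  wpe_uniform_consistency_general ρ V hρ hV D x
end

section
/- The double series ∑_{n=0}^∞ ∑_{m=0}^∞ 1/( (2n+1)²·(2m+1)²·((2n+1)² + (2m+1)²) ) converges and equals (π/4)·∑_{n=0}^∞ (1/(2n+1)⁴)·( π/2 − tanh((π/2)(2n+1))/(2n+1) ). -/
/-!
Summing first over `m`, the partial fractions
`1 / (a² b² (a² + b²)) = a⁻⁴ (1 / b² - 1 / (a² + b²))` reduce the inner series over odd `b` to
`∑ 1 / b² = π² / 8` and `∑ 1 / (a² + b²) = π tanh (π a / 2) / (4 a)`. The latter is the odd part of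
`∑ₙ 1 / (a² + n²)`, which the Mittag-Leffler expansion of `π cot (π z)` at `z = i a` evaluates;
its even part is the same series at `a / 2`, and `coth 2u = (1 + tanh² u) / (2 tanh u)` turns the
difference into a single `tanh`. Absolute convergence of the double series lets the rows be summed
first.
-/

open Real

theorem Real.tanh_two_mul (x : ℝ) : tanh (2 * x) = 2 * tanh x / (1 + tanh x ^ 2) := by
  have hc : cosh x ≠ 0 := (cosh_pos x).ne'
  rw [tanh_eq_sinh_div_cosh, tanh_eq_sinh_div_cosh, sinh_two_mul, cosh_two_mul]
  field_simp

theorem Real.tanh_ne_zero {x : ℝ} (hx : x ≠ 0) : tanh x ≠ 0 := by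
  simpa using tanh_injective.ne hx

theorem HasSum.odd_of_even {α : Type*} [AddCommGroup α] [UniformSpace α] [IsUniformAddGroup α]
    [CompleteSpace α] [T2Space α] {f : ℕ → α} {a b : α} (hf : HasSum f a)
    (he : HasSum (fun k => f (2 * k)) b) : HasSum (fun k => f (2 * k + 1)) (a - b) := by
  have ho : Summable fun k => f (2 * k + 1) :=
    hf.summable.comp_injective (i := fun k => 2 * k + 1) fun m n h => by simp at h; omega
  rw [← (he.even_add_odd ho.hasSum).unique hf, add_sub_cancel_left]
  exact ho.hasSum

theorem cotTerm_ofReal_mul_I (y : ℝ) (n : ℕ) :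
    cotTerm (y * Complex.I) n = -(2 * y / (y ^ 2 + (n + 1) ^ 2) : ℝ) * Complex.I := by
  have hd : y ^ 2 + ((n : ℝ) + 1) ^ 2 ≠ 0 := by positivity
  have hprod : (y * Complex.I - (n + 1)) * (y * Complex.I + (n + 1)) =
      -((y ^ 2 + (n + 1) ^ 2 : ℝ) : ℂ) := by
    push_cast
    linear_combination (y : ℂ) ^ 2 * Complex.I_sq
  have hne : (y * Complex.I - (n + 1)) * (y * Complex.I + (n + 1)) ≠ 0 := by
    rw [hprod]
    exact_mod_cast neg_ne_zero.2 hd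
  rw [cotTerm, one_div_add_one_div (left_ne_zero_of_mul hne) (right_ne_zero_of_mul hne), hprod]
  push_cast
  field_simp
  ring

theorem Complex.cot_ofReal_mul_I (y : ℝ) : cot (y * I) = -(1 / Real.tanh y : ℝ) * I := by
  rw [cot_eq_cos_div_sin, cos_mul_I, sin_mul_I, ← div_div, div_I, Real.tanh_eq_sinh_div_cosh,
    one_div_div]
  push_cast
  ring

theorem hasSum_one_div_sq_add_sq {y : ℝ} (hy : y ≠ 0) :
    HasSum (fun n : ℕ => 1 / (y ^ 2 + (n : ℝ) ^ 2))
      (π / (2 * y * tanh (π * y)) + 1 / (2 * y ^ 2)) := by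
  have hx : (y * Complex.I : ℂ) ∈ Complex.integerComplement := by
    rintro ⟨n, hn⟩
    exact hy (by simpa using congrArg Complex.im hn.symm)
  have hcot : HasSum (cotTerm (y * Complex.I))
      (π * Complex.cot (π * (y * Complex.I)) - 1 / (y * Complex.I)) := by
    rw [cot_series_rep' hx]
    exact (summable_cotTerm hx).hasSum
  have hy' : (y : ℂ) ≠ 0 := by exact_mod_cast hy
  have hsucc : HasSum (fun n : ℕ => 1 / (y ^ 2 + ((n + 1 : ℕ) : ℝ) ^ 2))
      (π / (2 * y * tanh (π * y)) - 1 / (2 * y ^ 2)) := by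
    rw [← Complex.hasSum_ofReal]
    have hval : ((π / (2 * y * tanh (π * y)) - 1 / (2 * y ^ 2) : ℝ) : ℂ) =
        Complex.I / (2 * y) * (π * Complex.cot (π * (y * Complex.I)) - 1 / (y * Complex.I)) := by
      rw [← mul_assoc, ← Complex.ofReal_mul, Complex.cot_ofReal_mul_I]
      push_cast
      ring_nf
      simp only [Complex.I_sq]
      field_simp
    rw [hval]
    refine (hcot.mul_left _).congr_fun fun n => ?_
    have hd : y ^ 2 + ((n : ℝ) + 1) ^ 2 ≠ 0 := by positivity
    rw [cotTerm_ofReal_mul_I]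
    push_cast
    ring_nf
    simp only [Complex.I_sq]
    field_simp
  convert HasSum.zero_add (f := fun n : ℕ => 1 / (y ^ 2 + (n : ℝ) ^ 2)) hsucc using 1
  simp
  ring

theorem hasSum_one_div_odd_sq : HasSum (fun k : ℕ => 1 / (2 * (k : ℝ) + 1) ^ 2) (π ^ 2 / 8) := by
  have he : HasSum (fun k : ℕ => 1 / ((2 * k : ℕ) : ℝ) ^ 2) (π ^ 2 / 24) := by
    rw [show π ^ 2 / 24 = 1 / 4 * (π ^ 2 / 6) by ring]
    exact (hasSum_zeta_two.mul_left _).congr_fun fun k => by push_cast; ring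
  rw [show π ^ 2 / 8 = π ^ 2 / 6 - π ^ 2 / 24 by ring]
  exact (hasSum_zeta_two.odd_of_even he).congr_fun fun k => by push_cast; rfl

theorem hasSum_one_div_sq_add_odd_sq {y : ℝ} (hy : y ≠ 0) :
    HasSum (fun k : ℕ => 1 / (y ^ 2 + (2 * (k : ℝ) + 1) ^ 2)) (π / (4 * y) * tanh (π / 2 * y)) := by
  have he : HasSum (fun k : ℕ => 1 / (y ^ 2 + ((2 * k : ℕ) : ℝ) ^ 2))
      (1 / 4 * (π / (2 * (y / 2) * tanh (π * (y / 2))) + 1 / (2 * (y / 2) ^ 2))) :=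
    ((hasSum_one_div_sq_add_sq (div_ne_zero hy two_ne_zero)).mul_left _).congr_fun fun k => by
      push_cast
      field_simp
      ring
  have hval : π / (4 * y) * tanh (π / 2 * y) = π / (2 * y * tanh (π * y)) + 1 / (2 * y ^ 2) -
      1 / 4 * (π / (2 * (y / 2) * tanh (π * (y / 2))) + 1 / (2 * (y / 2) ^ 2)) := by
    have ht : tanh (π / 2 * y) ≠ 0 := tanh_ne_zero (by positivity)
    rw [show π * y = 2 * (π / 2 * y) by ring, show π * (y / 2) = π / 2 * y by ring, tanh_two_mul]
    generalize tanh (π / 2 * y) = t at ht ⊢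
    field_simp
    ring
  rw [hval]
  exact ((hasSum_one_div_sq_add_sq hy).odd_of_even he).congr_fun fun k => by push_cast; rfl

theorem hasSum_one_div_sq_mul_odd_sq_mul_sq_add_odd_sq {a : ℝ} (ha : a ≠ 0) :
    HasSum (fun m : ℕ => 1 / (a ^ 2 * (2 * (m : ℝ) + 1) ^ 2 * (a ^ 2 + (2 * (m : ℝ) + 1) ^ 2)))
      (π / 4 * (1 / a ^ 4 * (π / 2 - tanh (π / 2 * a) / a))) := by
  rw [show π / 4 * (1 / a ^ 4 * (π / 2 - tanh (π / 2 * a) / a)) =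
      1 / a ^ 4 * (π ^ 2 / 8 - π / (4 * a) * tanh (π / 2 * a)) by field_simp; ring]
  refine ((hasSum_one_div_odd_sq.sub (hasSum_one_div_sq_add_odd_sq ha)).mul_left _).congr_fun
    fun m => ?_
  have hb : 2 * (m : ℝ) + 1 ≠ 0 := by positivity
  field_simp
  ring

theorem summable_one_div_odd_sq_mul_odd_sq_mul_sq_add_sq :
    Summable fun p : ℕ × ℕ => 1 / ((2 * (p.1 : ℝ) + 1) ^ 2 * (2 * (p.2 : ℝ) + 1) ^ 2 *
      ((2 * (p.1 : ℝ) + 1) ^ 2 + (2 * (p.2 : ℝ) + 1) ^ 2)) := by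
  refine (hasSum_one_div_odd_sq.summable.mul_of_nonneg hasSum_one_div_odd_sq.summable
    (fun _ => by positivity) (fun _ => by positivity)).of_nonneg_of_le (fun _ => by positivity)
    fun p => ?_
  rw [one_div_mul_one_div]
  refine one_div_le_one_div_of_le (by positivity) (le_mul_of_one_le_right (by positivity) ?_)
  exact le_add_of_nonneg_of_le (by positivity) (one_le_pow₀ (le_add_of_nonneg_left (by positivity)))

/-- The double series for the mean reaction time:
`∑_{n,m} 1/((2n+1)²(2m+1)²((2n+1)² + (2m+1)²))`
converges and equals `(π/4) ∑_n (2n+1)⁻⁴ (π/2 − tanh((π/2)(2n+1))/(2n+1))`. -/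
theorem double_series_mean_reaction_time :
    HasSum
      (fun p : ℕ × ℕ =>
        1 / ((2 * (p.1 : ℝ) + 1) ^ 2 * (2 * (p.2 : ℝ) + 1) ^ 2 *
          ((2 * (p.1 : ℝ) + 1) ^ 2 + (2 * (p.2 : ℝ) + 1) ^ 2)))
      (π / 4 *
        ∑' n : ℕ, 1 / (2 * (n : ℝ) + 1) ^ 4 *
          (π / 2 - Real.tanh (π / 2 * (2 * (n : ℝ) + 1)) / (2 * (n : ℝ) + 1))) := by
  have hsum := summable_one_div_odd_sq_mul_odd_sq_mul_sq_add_sq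
  have hrows := hsum.hasSum.prod_fiberwise fun n : ℕ =>
    hasSum_one_div_sq_mul_odd_sq_mul_sq_add_odd_sq (a := 2 * (n : ℝ) + 1) (by positivity)
  rw [← tsum_mul_left, hrows.tsum_eq]
  exact hsum.hasSum
end
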